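/- The algebra automorphisms of A2 are exactly the linear maps φ of the form φ(e1) = e1, φ(e2) = α²e2, φ(e3) = βe2 + αe3, where α ∈ ℂ \ {0} and β ∈ ℂ. -/

import Mathlib

set_option linter.unreachableTactic false
set_option linter.unnecessarySeqFocus false
set_option linter.unusedTactic false

noncomputable section

/-- The underlying space of our 3-dimensional algebras. -/
abbrev V3 : Type := Fin 3 → ℂ
/-- Multiplication of `A2`: unit `e1`, and `e3 * e3 = e2` is the only nonzero
product among `e2, e3`. -/
def A2mul : V3 →ₗ[ℂ] V3 →ₗ[ℂ] V3 :=
  LinearMap.mk₂ ℂ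
    (fun x y => ![x 0 * y 0, x 0 * y 1 + x 1 * y 0 + x 2 * y 2, x 0 * y 2 + x 2 * y 0])
    (fun x x' y => by funext k; fin_cases k <;> simp <;> ring)
    (fun a x y => by funext k; fin_cases k <;> simp <;> ring)
    (fun x y y' => by funext k; fin_cases k <;> simp <;> ring)
    (fun a x y => by funext k; fin_cases k <;> simp <;> ring)
/-- The basis vector `e1` (the unit). -/
def e1 : V3 := ![1, 0, 0]
/-- The basis vector `e2`. -/
def e2 : V3 := ![0, 1, 0]
/-- The basis vector `e3`. -/
def e3 : V3 := ![0, 0, 1]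

theorem map_unit_of_surjective {M : Type*} (mul : M → M → M) {e : M}
    (one_mul : ∀ z, mul e z = z) (mul_one : ∀ z, mul z e = z) {f : M → M}
    (hf : Function.Surjective f) (hmul : ∀ x y, f (mul x y) = mul (f x) (f y)) : f e = e := by
  obtain ⟨z, hz⟩ := hf e
  calc f e = mul (f e) (f z) := by rw [hz, mul_one]
    _ = f z := by rw [← hmul, one_mul]
    _ = e := hz

lemma A2mul_apply (x y : V3) :
    A2mul x y = ![x 0 * y 0, x 0 * y 1 + x 1 * y 0 + x 2 * y 2, x 0 * y 2 + x 2 * y 0] := rfl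

lemma A2mul_e1_left (z : V3) : A2mul e1 z = z := by
  funext k; fin_cases k <;> simp [A2mul_apply, e1]

lemma A2mul_e1_right (z : V3) : A2mul z e1 = z := by
  funext k; fin_cases k <;> simp [A2mul_apply, e1]

lemma A2mul_e3_e3 : A2mul e3 e3 = e2 := by
  funext k; fin_cases k <;> simp [A2mul_apply, e2, e3]

lemma A2mul_e2_e2 : A2mul e2 e2 = 0 := by
  funext k; fin_cases k <;> simp [A2mul_apply, e2]

lemma e2_ne_zero : e2 ≠ 0 := fun h => by simpa [e2] using congrFun h 1

lemma eq_smul_e2_add_smul_e3 {v : V3} (hv : v 0 = 0) : v = v 1 • e2 + v 2 • e3 := by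
  funext k; fin_cases k <;> simp [e2, e3, hv]

lemma A2mul_self_of_apply_zero {v : V3} (hv : v 0 = 0) : A2mul v v = v 2 ^ 2 • e2 := by
  funext k; fin_cases k <;> simp [A2mul_apply, e2, hv, sq]

-- The `e1`-coordinate of a square is the square of the `e1`-coordinate.
lemma apply_zero_eq_zero_of_A2mul_self_A2mul_self {v : V3}
    (hv : A2mul (A2mul v v) (A2mul v v) = 0) : v 0 = 0 := by
  have h := congrFun hv 0
  simp only [A2mul_apply, Matrix.cons_val_zero, Pi.zero_apply] at h
  simpa using h

lemma apply_eq_of_basis {f : V3 →ₗ[ℂ] V3} {α β : ℂ} (h1 : f e1 = e1) (h2 : f e2 = α ^ 2 • e2)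
    (h3 : f e3 = β • e2 + α • e3) (x : V3) :
    f x = ![x 0, α ^ 2 * x 1 + β * x 2, α * x 2] := by
  have hx : x = x 0 • e1 + x 1 • e2 + x 2 • e3 := by
    funext k; fin_cases k <;> simp [e1, e2, e3]
  rw [hx, map_add, map_add, map_smul, map_smul, map_smul, h1, h2, h3]
  funext k; fin_cases k <;> simp [e1, e2, e3] <;> ring

theorem map_A2mul_of_basis {f : V3 →ₗ[ℂ] V3} {α β : ℂ} (h1 : f e1 = e1)
    (h2 : f e2 = α ^ 2 • e2) (h3 : f e3 = β • e2 + α • e3) (x y : V3) :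
    f (A2mul x y) = A2mul (f x) (f y) := by
  simp only [apply_eq_of_basis h1 h2 h3, A2mul_apply]
  funext k; fin_cases k <;> simp <;> ring

/-- **Theorem.** The algebra automorphisms of `A2` are exactly the linear maps
`φ` with `φ e1 = e1`, `φ e2 = α² e2`, `φ e3 = β e2 + α e3` for `α ∈ ℂ \ {0}`,
`β ∈ ℂ`. -/
theorem automorphisms_of_A2 (φ : V3 ≃ₗ[ℂ] V3) :
    (∀ x y, φ (A2mul x y) = A2mul (φ x) (φ y)) ↔
      ∃ α β : ℂ, α ≠ 0 ∧ φ e1 = e1 ∧ φ e2 = α ^ 2 • e2 ∧ φ e3 = β • e2 + α • e3 := by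
  constructor
  · intro hmul
    have he1 : φ e1 = e1 :=
      map_unit_of_surjective (fun x y => A2mul x y) A2mul_e1_left A2mul_e1_right φ.surjective hmul
    have he2 : φ e2 = A2mul (φ e3) (φ e3) := by rw [← hmul, A2mul_e3_e3]
    have hφe3 : φ e3 0 = 0 := by
      apply apply_zero_eq_zero_of_A2mul_self_A2mul_self
      rw [← he2, ← hmul, A2mul_e2_e2, map_zero]
    have hα : φ e3 2 ≠ 0 := by
      intro hα
      apply e2_ne_zero
      apply φ.injective
      rw [he2, A2mul_self_of_apply_zero hφe3, hα, map_zero]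
      simp
    exact ⟨φ e3 2, φ e3 1, hα, he1, by rw [he2, A2mul_self_of_apply_zero hφe3],
      eq_smul_e2_add_smul_e3 hφe3⟩
  · rintro ⟨α, β, -, he1, he2, he3⟩
    exact map_A2mul_of_basis (f := φ.toLinearMap) he1 he2 he3
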